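/- The Lie algebra L_{7,3}² is a contraction of the Lie algebra L_{7,4}. In particular, a seven-dimensional indecomposable real Lie algebra from Turkowski's list with nontrivial Levi decomposition arises as a contraction in this way. -/

import Mathlib

open Filter Topology

/-- `IsContraction g h` : the Lie algebra `h` is a contraction of the Lie algebra `g`. -/
def IsContraction (g h : Type*) [LieRing g] [LieAlgebra ℝ g] [TopologicalSpace g]
    [LieRing h] [LieAlgebra ℝ h] : Prop :=
  ∃ (f : ℝ → (g ≃ₗ[ℝ] g)) (e : g ≃ₗ[ℝ] h), ∀ X Y : g,
    Filter.Tendsto (fun t : ℝ => (f t).symm ⁅f t X, f t Y⁆) Filter.atTop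
      (nhds (e.symm ⁅e X, e Y⁆))

/-- Structure constants of `L_{7,3}²` (upper triangular part, 0-based indices). -/
def L732T {L : Type*} [AddCommGroup L] [Module ℝ L] (b : Fin 7 → L) : Fin 7 → Fin 7 → L :=
  fun i j =>
    if i = 0 ∧ j = 1 then (2 : ℝ) • b 1 else
    if i = 0 ∧ j = 2 then (-2 : ℝ) • b 2 else
    if i = 1 ∧ j = 2 then b 0 else
    if i = 0 ∧ j = 3 then b 3 else
    if i = 0 ∧ j = 4 then -b 4 else
    if i = 1 ∧ j = 4 then b 3 else
    if i = 2 ∧ j = 3 then b 4 else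
    if i = 3 ∧ j = 6 then b 3 else
    if i = 4 ∧ j = 6 then b 4 else
    if i = 5 ∧ j = 6 then (2 : ℝ) • b 5 else 0

/-- Structure constants of `L_{7,4}` (upper triangular part, 0-based indices). -/
def L74T {L : Type*} [AddCommGroup L] [Module ℝ L] (b : Fin 7 → L) : Fin 7 → Fin 7 → L :=
  fun i j =>
    if i = 0 ∧ j = 1 then (2 : ℝ) • b 1 else
    if i = 0 ∧ j = 2 then (-2 : ℝ) • b 2 else
    if i = 1 ∧ j = 2 then b 0 else
    if i = 0 ∧ j = 3 then b 3 else
    if i = 0 ∧ j = 4 then -b 4 else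
    if i = 1 ∧ j = 4 then b 3 else
    if i = 2 ∧ j = 3 then b 4 else
    if i = 3 ∧ j = 4 then b 5 else
    if i = 3 ∧ j = 6 then b 3 else
    if i = 4 ∧ j = 6 then b 4 else
    if i = 5 ∧ j = 6 then (2 : ℝ) • b 5 else 0

/-
`L_{7,4}` is `L_{7,3}²` deformed by the cocycle `φ(X₄, X₅) = X₆`. In `L_{7,3}²` the vector `X₆`
occurs only in `[X₆, X₇] = 2X₆`, so rescaling `X₆ ↦ s X₆` is an automorphism of `L_{7,3}²`, while it
turns `φ` into `s⁻¹ φ`. Conjugating the bracket of `L_{7,4}` by this rescaling therefore gives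
`[·,·]_{7,3} + s⁻¹ φ`, which tends to `[·,·]_{7,3}` as `s → ∞`.
-/

variable {R M N L : Type*} [CommRing R] [AddCommGroup M] [Module R M] [AddCommGroup N] [Module R N]

theorem LinearMap.IsAlt.ext_basis_of_lt {ι : Type*} [LinearOrder ι] (b : Module.Basis ι R M)
    {B B' : M →ₗ[R] M →ₗ[R] N} (hB : B.IsAlt) (hB' : B'.IsAlt)
    (h : ∀ i j, i < j → B (b i) (b j) = B' (b i) (b j)) : B = B' := by
  refine LinearMap.ext_basis b b fun i j => ?_
  rcases lt_trichotomy i j with hij | rfl | hji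
  · exact h i j hij
  · rw [hB.self_eq_zero, hB'.self_eq_zero]
  · rw [← hB.neg, ← hB'.neg, h j i hji]

section conjBracket

variable [LieRing L] [LieAlgebra R L]

def conjBracket (e : M ≃ₗ[R] L) : M →ₗ[R] M →ₗ[R] M :=
  LinearMap.mk₂ R (fun x y => e.symm ⁅e x, e y⁆)
    (fun _ _ _ => by simp [add_lie]) (fun _ _ _ => by simp [smul_lie])
    (fun _ _ _ => by simp [lie_add]) (fun _ _ _ => by simp [lie_smul])

@[simp]
theorem conjBracket_apply (e : M ≃ₗ[R] L) (x y : M) : conjBracket e x y = e.symm ⁅e x, e y⁆ :=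
  rfl

theorem isAlt_conjBracket (e : M ≃ₗ[R] L) : (conjBracket e).IsAlt := fun x => by simp

end conjBracket

namespace Module.Basis

variable {ι : Type*} [DecidableEq ι]

noncomputable def scaleAt (b : Basis ι R M) (k : ι) (u : Rˣ) : M ≃ₗ[R] M :=
  b.equiv (b.unitsSMul (Function.update 1 k u)) (Equiv.refl ι)

variable (b : Basis ι R M) (k : ι) (u : Rˣ)

@[simp]
theorem scaleAt_apply_self : b.scaleAt k u (b k) = (u : R) • b k := by
  simp [scaleAt, unitsSMul_apply, Units.smul_def]

@[simp]
theorem scaleAt_apply_of_ne {i : ι} (h : i ≠ k) : b.scaleAt k u (b i) = b i := by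
  simp [scaleAt, unitsSMul_apply, h]

theorem scaleAt_apply (i : ι) : b.scaleAt k u (b i) = (if i = k then (u : R) else 1) • b i := by
  obtain rfl | h := eq_or_ne i k <;> simp [*]

@[simp]
theorem scaleAt_symm : (b.scaleAt k u).symm = b.scaleAt k u⁻¹ := by
  refine b.ext' fun i => ?_
  rw [LinearEquiv.symm_apply_eq]
  obtain rfl | h := eq_or_ne i k
  · simp [smul_smul]
  · simp [h]

end Module.Basis

theorem map_L732T {L L' F : Type*} [AddCommGroup L] [Module ℝ L] [AddCommGroup L'] [Module ℝ L']
    [FunLike F L L'] [LinearMapClass F ℝ L L'] (g : F) (b : Fin 7 → L) (i j : Fin 7) :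
    g (L732T b i j) = L732T (g ∘ b) i j := by
  fin_cases i <;> fin_cases j <;> simp [L732T]

section L74

variable {A : Type*} [LieRing A] [LieAlgebra ℝ A] (bA : Module.Basis (Fin 7) ℝ A)
  (hA : ∀ i j : Fin 7, i < j → ⁅bA i, bA j⁆ = L74T (⇑bA) i j)

include hA in
theorem conjBracket_scaleAt_five_basis (u : ℝˣ) {i j : Fin 7} (hij : i < j) :
    conjBracket (bA.scaleAt 5 u) (bA i) (bA j) =
      L732T bA i j + (u⁻¹ : ℝ) • (L74T bA i j - L732T bA i j) := by
  simp only [conjBracket_apply, Module.Basis.scaleAt_symm, Module.Basis.scaleAt_apply, smul_lie,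
    lie_smul, hA i j hij, map_smul, smul_smul]
  fin_cases i <;> fin_cases j <;> (try exact absurd hij (by decide)) <;>
    simp +decide only [L74T, L732T, map_smul, map_neg, map_zero, Module.Basis.scaleAt_apply]
  all_goals first | module | simp [smul_smul, mul_left_comm (u : ℝ)]

variable {B : Type*} [LieRing B] [LieAlgebra ℝ B] {bB : Module.Basis (Fin 7) ℝ B}
  (hB : ∀ i j : Fin 7, i < j → ⁅bB i, bB j⁆ = L732T (⇑bB) i j)

include hB in
theorem conjBracket_equiv_basis {i j : Fin 7} (hij : i < j) :
    conjBracket (bA.equiv bB (Equiv.refl _)) (bA i) (bA j) = L732T bA i j := by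
  have h : bB.equiv bA (Equiv.refl _) ∘ bB = bA := funext fun k => by simp
  simp [hB i j hij, map_L732T, h]

-- `conjBracket (.refl ℝ A) - conjBracket (bA.equiv bB _)` is the cocycle `φ` of the header.
include hA hB in
theorem conjBracket_scaleAt_five (u : ℝˣ) :
    conjBracket (bA.scaleAt 5 u) = conjBracket (bA.equiv bB (Equiv.refl _)) +
      (u⁻¹ : ℝ) • (conjBracket (LinearEquiv.refl ℝ A) - conjBracket (bA.equiv bB (Equiv.refl _))) :=
  LinearMap.IsAlt.ext_basis_of_lt bA (isAlt_conjBracket _) (fun _ => by simp) fun i j hij => by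
    simp [conjBracket_scaleAt_five_basis bA hA u hij, conjBracket_equiv_basis bA hB hij, hA i j hij]

end L74

theorem L732_is_contraction_of_L74_general
    (A : Type) [LieRing A] [LieAlgebra ℝ A]
    [TopologicalSpace A] [IsTopologicalAddGroup A] [ContinuousSMul ℝ A]
    (bA : Module.Basis (Fin 7) ℝ A) (hA : ∀ i j : Fin 7, i < j → ⁅bA i, bA j⁆ = L74T (⇑bA) i j)
    (B : Type) [LieRing B] [LieAlgebra ℝ B]
    (bB : Module.Basis (Fin 7) ℝ B) (hB : ∀ i j : Fin 7, i < j → ⁅bB i, bB j⁆ = L732T (⇑bB) i j) :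
    IsContraction A B := by
  let u : ℝ → ℝˣ := fun t => Units.mk0 (Real.exp t) (Real.exp_ne_zero t)
  have hu : Tendsto (fun t => ((u t)⁻¹ : ℝ)) atTop (𝓝 0) := by
    simpa [u, Real.exp_neg] using Real.tendsto_exp_neg_atTop_nhds_zero
  refine ⟨fun t => bA.scaleAt 5 (u t), bA.equiv bB (Equiv.refl _), fun X Y => ?_⟩
  simp_rw [← conjBracket_apply, conjBracket_scaleAt_five bA hA hB]
  simpa using tendsto_const_nhds.add (hu.smul_const
    ((conjBracket (LinearEquiv.refl ℝ A) - conjBracket (bA.equiv bB (Equiv.refl _))) X Y))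

/-- `L_{7,3}²` is a contraction of `L_{7,4}`. -/
theorem L732_is_contraction_of_L74
    (A : Type) [LieRing A] [LieAlgebra ℝ A]
    [TopologicalSpace A] [IsTopologicalAddGroup A] [ContinuousSMul ℝ A] [T2Space A]
    (bA : Module.Basis (Fin 7) ℝ A) (hA : ∀ i j : Fin 7, i < j → ⁅bA i, bA j⁆ = L74T (⇑bA) i j)
    (B : Type) [LieRing B] [LieAlgebra ℝ B]
    (bB : Module.Basis (Fin 7) ℝ B) (hB : ∀ i j : Fin 7, i < j → ⁅bB i, bB j⁆ = L732T (⇑bB) i j) :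
    IsContraction A B :=
  L732_is_contraction_of_L74_general A bA hA B bB hB
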